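/- arXiv:1902.08996 — 2 statements merged into one kernel-verified Lean document; each statement's English description precedes it below -/
import Mathlib

section
/- Let n ≥ 1, let V_1,…,V_n be finite-dimensional real vector spaces, and for each ordered pair (a,b) ∈ {1,…,n}² let γ_{a,b} : V_a → V_b be a linear map. Let σ be the shift map on the full shift Σ_n = {1,…,n}^ℕ, σ(x)_k = x_{k+1}, and let μ be a σ-invariant ergodic Borel probability measure on Σ_n. For x ∈ Σ_n let W_x^+ denote the direct limit of the directed system V_{x_0} → V_{x_1} → V_{x_2} → ⋯ whose connecting map from level k to level k+1 is γ_{x_k, x_{k+1}}. Then for μ-almost every x ∈ Σ_n, the canonical linear map V_{x_0} → W_x^+ (sending v to its equivalence class in the direct limit) is surjective; equivalently, there is a subspace ES_x ⊆ V_{x_0} that the canonical map carries onto W_x^+. -/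
/-!
Along a path `x`, the ranks of the composites `V (x i) → V (x j)` decrease in `j` and stabilise
at an eventual rank, which increases with the level `i`. If the eventual rank at every level `k` is
at most the one at level `0`, then for large `j` the images of `V (x 0)` and of `V (x k)` in
`V (x j)` coincide, so every element of the direct limit comes from `V (x 0)`. Writing `r x` for
the eventual rank at level `0`, the one at level `k` is `r (σ^k x)`, and `r x ≤ r (σ x)`. The
sublevel sets of `r` are therefore forward-invariant, and an invariant probability measure cannot
lose mass on them, so `r (σ^k x) = r x` for all `k` and almost every `x`.
-/

open MeasureTheory

/-- The composed connecting maps of an `ℕ`-indexed directed system of real vector spaces whose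
one-step connecting maps are `γ k : V k →ₗ[ℝ] V (k+1)`. -/
noncomputable def comps {V : ℕ → Type} [∀ k, AddCommGroup (V k)] [∀ k, Module ℝ (V k)]
    (γ : ∀ k, V k →ₗ[ℝ] V (k + 1)) : ∀ i j : ℕ, i ≤ j → (V i →ₗ[ℝ] V j) :=
  fun i _ h => Nat.leRecOn h (fun {k} (g : V i →ₗ[ℝ] V k) => (γ k).comp g) LinearMap.id

section DirectedSystem

variable {W : ℕ → Type} [∀ k, AddCommGroup (W k)] [∀ k, Module ℝ (W k)]
  (δ : ∀ k, W k →ₗ[ℝ] W (k + 1))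

theorem comps_self (i : ℕ) (h : i ≤ i) : comps δ i i h = LinearMap.id :=
  Nat.leRecOn_self _

theorem comps_succ {i j : ℕ} (h : i ≤ j) (h' : i ≤ j + 1) :
    comps δ i (j + 1) h' = (δ j).comp (comps δ i j h) :=
  Nat.leRecOn_succ h _

theorem comps_comp {i j k : ℕ} (hij : i ≤ j) (hjk : j ≤ k) :
    (comps δ j k hjk).comp (comps δ i j hij) = comps δ i k (hij.trans hjk) := by
  induction k, hjk using Nat.le_induction with
  | base => rw [comps_self, LinearMap.id_comp]
  | succ k hjk ih => rw [comps_succ δ hjk, comps_succ δ (hij.trans hjk), LinearMap.comp_assoc, ih]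

theorem comps_shift {i j : ℕ} (h : i ≤ j) :
    comps (V := fun t => W (t + 1)) (fun t => δ (t + 1)) i j h
      = comps δ (i + 1) (j + 1) (Nat.succ_le_succ h) := by
  induction j, h using Nat.le_induction with
  | base => rw [comps_self, comps_self]
  | succ j h ih => rw [comps_succ _ h, comps_succ δ (Nat.succ_le_succ h), ih]

theorem range_comps_le_range_comps {i j k : ℕ} (hij : i ≤ j) (hjk : j ≤ k) :
    LinearMap.range (comps δ i k (hij.trans hjk)) ≤ LinearMap.range (comps δ j k hjk) := by
  rw [← comps_comp δ hij hjk]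
  exact LinearMap.range_comp_le_range _ _

/-- The rank at which the composites `W i → W j` stabilise as `j → ∞`. The target is indexed
as `m + i`, not `i + m`, so that shifting the system is compatible by definitional unfolding. -/
noncomputable def eventualRank (i : ℕ) : ℕ :=
  ⨅ m, Module.finrank ℝ (LinearMap.range (comps δ i (m + i) (Nat.le_add_left i m)))

theorem eventualRank_shift (i : ℕ) :
    eventualRank (W := fun t => W (t + 1)) (fun t => δ (t + 1)) i = eventualRank δ (i + 1) := by
  unfold eventualRank
  congr 1
  funext m
  rw [comps_shift]
  rfl

variable [∀ k, FiniteDimensional ℝ (W k)]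

theorem finrank_range_comps_le {i j k : ℕ} (hij : i ≤ j) (hjk : j ≤ k) :
    Module.finrank ℝ (LinearMap.range (comps δ i k (hij.trans hjk)))
      ≤ Module.finrank ℝ (LinearMap.range (comps δ i j hij)) := by
  rw [← comps_comp δ hij hjk, LinearMap.range_comp]
  exact Submodule.finrank_map_le _ _

theorem eventualRank_le_finrank_range {i j : ℕ} (h : i ≤ j) :
    eventualRank δ i ≤ Module.finrank ℝ (LinearMap.range (comps δ i j h)) :=
  (ciInf_le (OrderBot.bddBelow _) j).trans (finrank_range_comps_le δ h (Nat.le_add_right j i))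

theorem exists_finrank_range_comps_eq_eventualRank (i : ℕ) :
    ∃ m₀, ∀ m, m₀ ≤ m →
      Module.finrank ℝ (LinearMap.range (comps δ i (m + i) (Nat.le_add_left i m)))
        = eventualRank δ i := by
  obtain ⟨m₀, hm₀⟩ := ciInf_mem fun m =>
    Module.finrank ℝ (LinearMap.range (comps δ i (m + i) (Nat.le_add_left i m)))
  refine ⟨m₀, fun m hm => le_antisymm ?_ (eventualRank_le_finrank_range δ _)⟩
  exact (finrank_range_comps_le δ (Nat.le_add_left i m₀) (Nat.add_le_add_right hm i)).trans
    hm₀.le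

theorem eventualRank_mono : Monotone (eventualRank δ) := fun _ k hik =>
  le_ciInf fun m => (eventualRank_le_finrank_range δ (hik.trans (Nat.le_add_left k m))).trans
    (Submodule.finrank_mono (range_comps_le_range_comps δ hik (Nat.le_add_left k m)))

theorem exists_range_comps_eq {k : ℕ} (hk : eventualRank δ k ≤ eventualRank δ 0) :
    ∃ j, ∃ hkj : k ≤ j,
      LinearMap.range (comps δ 0 j (Nat.zero_le j)) = LinearMap.range (comps δ k j hkj) := by
  obtain ⟨m₀, hm₀⟩ := exists_finrank_range_comps_eq_eventualRank δ 0
  obtain ⟨m₁, hm₁⟩ := exists_finrank_range_comps_eq_eventualRank δ k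
  set m := max m₀ m₁
  refine ⟨m + k, Nat.le_add_left k m, Submodule.eq_of_le_of_finrank_le
    (range_comps_le_range_comps δ (Nat.zero_le k) _) ?_⟩
  rw [hm₁ m (le_max_right _ _)]
  exact hk.trans (hm₀ (m + k) ((le_max_left _ _).trans (Nat.le_add_right _ _))).ge

theorem surjective_of_zero_of_eventualRank_le (h : ∀ k, eventualRank δ k ≤ eventualRank δ 0) :
    Function.Surjective (Module.DirectLimit.of ℝ ℕ W (comps δ) 0) := by
  intro z
  obtain ⟨k, v, rfl⟩ := Module.DirectLimit.exists_of z
  obtain ⟨j, hkj, hrange⟩ := exists_range_comps_eq δ (h k)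
  obtain ⟨w, hw⟩ : comps δ k j hkj v ∈ LinearMap.range (comps δ 0 j (Nat.zero_le j)) :=
    hrange ▸ LinearMap.mem_range_self _ v
  refine ⟨w, ?_⟩
  rw [← Module.DirectLimit.of_f (hij := Nat.zero_le j), hw, Module.DirectLimit.of_f]

end DirectedSystem

theorem DependsOn.measurable_of_finite {ι : Type*} {α : ι → Type*} [∀ i, MeasurableSpace (α i)]
    [∀ i, Countable (α i)] [∀ i, MeasurableSingletonClass (α i)] {β : Type*} [MeasurableSpace β]
    [Nonempty β] {f : (∀ i, α i) → β} {s : Set ι} (hs : s.Finite) (hf : DependsOn f s) :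
    Measurable f := by
  have := hs.to_subtype
  obtain ⟨g, rfl⟩ := dependsOn_iff_exists_comp.1 hf
  exact (measurable_of_countable g).comp (measurable_pi_lambda _ fun i => measurable_pi_apply _)

theorem MeasureTheory.MeasurePreserving.ae_forall_iterate_eq_of_le_comp {α β : Type*}
    [MeasurableSpace α] {μ : Measure α} [IsFiniteMeasure μ] {T : α → α}
    (hT : MeasurePreserving T μ μ) [LinearOrder β] [Countable β] [MeasurableSpace β]
    [MeasurableSingletonClass β] {f : α → β} (hf : Measurable f) (hle : ∀ x, f x ≤ f (T x)) :
    ∀ᵐ x ∂μ, ∀ k, f (T^[k] x) = f x := by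
  have hsublevel (c : β) : T ⁻¹' {x | f x ≤ c} =ᵐ[μ] {x | f x ≤ c} := by
    have hmeas : MeasurableSet {x | f x ≤ c} := hf (Set.to_countable (Set.Iic c)).measurableSet
    exact ae_eq_of_subset_of_measure_ge (fun x hx => (hle x).trans hx)
      (hT.measure_preimage hmeas.nullMeasurableSet).ge
      (hmeas.preimage hT.measurable).nullMeasurableSet (measure_ne_top μ _)
  have hiter (c : β) (k : ℕ) : T^[k] ⁻¹' {x | f x ≤ c} =ᵐ[μ] {x | f x ≤ c} :=
    hT.quasiMeasurePreserving.preimage_iterate_ae_eq k (hsublevel c)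
  filter_upwards [ae_all_iff.2 fun c => ae_all_iff.2 (hiter c)] with x hx k
  have hmono : Monotone fun k => f (T^[k] x) := monotone_nat_of_le_succ fun k => by
    simpa only [Function.iterate_succ_apply'] using hle (T^[k] x)
  exact le_antisymm ((hx (f x) k).mpr le_rfl) (hmono (Nat.zero_le k))

section Shift

variable {n : ℕ} {V : Fin n → Type} [∀ a, AddCommGroup (V a)] [∀ a, Module ℝ (V a)]
  (γ : ∀ a b : Fin n, V a →ₗ[ℝ] V b)

noncomputable def eventualRankAlong (x : ℕ → Fin n) : ℕ :=
  eventualRank (fun k => γ (x k) (x (k + 1))) 0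

theorem eventualRankAlong_iterate_shift (k : ℕ) (x : ℕ → Fin n) :
    eventualRankAlong γ ((fun x i => x (i + 1))^[k] x)
      = eventualRank (fun i => γ (x i) (x (i + 1))) k := by
  induction k generalizing x with
  | zero => rfl
  | succ k ih =>
    rw [Function.iterate_succ_apply, ih]
    exact eventualRank_shift (fun i => γ (x i) (x (i + 1))) k

/-- Bundling source and target lets paths that agree on their first `m + 1` letters be compared by
plain equality rather than `HEq`. -/
noncomputable def pathMap (x : ℕ → Fin n) (m : ℕ) : Σ a b : Fin n, V a →ₗ[ℝ] V b :=
  ⟨x 0, x m, comps (fun k => γ (x k) (x (k + 1))) 0 m (Nat.zero_le m)⟩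

theorem pathMap_succ (x : ℕ → Fin n) (m : ℕ) :
    pathMap γ x (m + 1) = ⟨(pathMap γ x m).1, x (m + 1),
      (γ (pathMap γ x m).2.1 (x (m + 1))).comp (pathMap γ x m).2.2⟩ := by
  rw [pathMap, comps_succ _ (Nat.zero_le m)]
  rfl

theorem dependsOn_pathMap (m : ℕ) : DependsOn (pathMap γ · m) (Set.Iic m) := by
  induction m with
  | zero =>
    intro x y h
    simp only [pathMap, comps_self]
    rw [h 0 Set.self_mem_Iic]
  | succ m ih =>
    intro x y h
    have hm : pathMap γ x m = pathMap γ y m :=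
      ih fun i hi => h i (Set.mem_Iic.2 (Nat.le_succ_of_le hi))
    dsimp only
    rw [pathMap_succ, pathMap_succ, hm, h (m + 1) Set.self_mem_Iic]

theorem measurable_eventualRankAlong : Measurable (eventualRankAlong γ) :=
  Measurable.iInf fun m => DependsOn.measurable_of_finite (Set.finite_Iic m)
    fun _ _ h => congrArg (fun p : Σ a b : Fin n, V a →ₗ[ℝ] V b =>
      Module.finrank ℝ (LinearMap.range p.2.2)) (dependsOn_pathMap γ m h)

variable [∀ a, FiniteDimensional ℝ (V a)]

theorem eventualRankAlong_le_shift (x : ℕ → Fin n) :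
    eventualRankAlong γ x ≤ eventualRankAlong γ (fun i => x (i + 1)) :=
  (eventualRank_mono _ (Nat.zero_le 1)).trans_eq (eventualRank_shift _ 0).symm

end Shift

theorem stmt4_general (n : ℕ) (V : Fin n → Type)
    [∀ a, AddCommGroup (V a)] [∀ a, Module ℝ (V a)] [∀ a, FiniteDimensional ℝ (V a)]
    (γ : ∀ a b : Fin n, V a →ₗ[ℝ] V b)
    (μ : Measure (ℕ → Fin n)) [IsProbabilityMeasure μ]
    (herg : Ergodic (fun x (k : ℕ) => x (k + 1)) μ) :
    ∀ᵐ x ∂μ, Function.Surjective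
      (Module.DirectLimit.of ℝ ℕ (fun k => V (x k))
        (comps (fun k => γ (x k) (x (k + 1)))) 0) := by
  filter_upwards [herg.toMeasurePreserving.ae_forall_iterate_eq_of_le_comp
    (measurable_eventualRankAlong γ) (eventualRankAlong_le_shift γ)] with x hx
  refine surjective_of_zero_of_eventualRank_le _ fun k => ?_
  rw [← eventualRankAlong_iterate_shift]
  exact (hx k).le

/-- For finite-dimensional real vector spaces `V 1, …, V n` with linear maps
`γ a b : V a →ₗ[ℝ] V b`, and a shift-invariant ergodic measure `μ` on the full shift
`Σ_n = (ℕ → Fin n)`, for `μ`-a.e. `x` the canonical map from `V (x 0)` to the direct limit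
`W_x^+` of the system `V (x 0) → V (x 1) → ⋯` (with connecting maps `γ (x k) (x (k+1))`)
is surjective. -/
theorem stmt4 (n : ℕ) (hn : 1 ≤ n) (V : Fin n → Type)
    [∀ a, AddCommGroup (V a)] [∀ a, Module ℝ (V a)] [∀ a, FiniteDimensional ℝ (V a)]
    (γ : ∀ a b : Fin n, V a →ₗ[ℝ] V b)
    (μ : Measure (ℕ → Fin n)) [IsProbabilityMeasure μ]
    (herg : Ergodic (fun x (k : ℕ) => x (k + 1)) μ) :
    ∀ᵐ x ∂μ, Function.Surjective
      (Module.DirectLimit.of ℝ ℕ (fun k => V (x k))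
        (comps (fun k => γ (x k) (x (k + 1)))) 0) :=
  stmt4_general n V γ μ herg
end

section
/- Let B = (V, E) be a Bratteli diagram with path space X_B, and let μ be a Borel probability measure on X_B invariant under the tail equivalence relation. For each k ≥ 1 let D_k ⊆ E_{0,k} be a set of finite paths from level 0 to level k, and let Y_k = ⋃_{ē ∈ D_k} C_ē ⊆ X_B. Suppose there exist constants c, C > 0 and real numbers α > β ≥ 0 such that for every k ≥ 1: |E_v| ≥ c·e^{αk} for every vertex v ∈ V_k, and |D_k| ≤ C·e^{βk}. Then μ(limsup_{k→∞} Y_k) = 0, where limsup_{k→∞} Y_k = ⋂_{n≥1} ⋃_{k≥n} Y_k. -/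
open MeasureTheory
open scoped ENNReal

/-- A Bratteli diagram: finite nonempty vertex sets at each level, finite edge sets between
consecutive levels (here `E k` is the set of edges between level `k` and level `k+1`), with
surjective source and range maps. -/
structure BratteliDiagram where
  V : ℕ → Type
  E : ℕ → Type
  fintV : ∀ k, Fintype (V k)
  fintE : ∀ k, Fintype (E k)
  neV : ∀ k, Nonempty (V k)
  src : ∀ k, E k → V k
  rng : ∀ k, E k → V (k + 1)
  src_surj : ∀ k, Function.Surjective (src k)
  rng_surj : ∀ k, Function.Surjective (rng k)

attribute [instance] BratteliDiagram.fintV BratteliDiagram.fintE BratteliDiagram.neV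

namespace BratteliDiagram

variable (B : BratteliDiagram)

/-- The space of infinite paths of a Bratteli diagram. -/
def PathSpace : Type :=
  {e : ∀ k, B.E k // ∀ k, B.rng k (e k) = B.src (k + 1) (e (k + 1))}

/-- The Borel σ-algebra of the path space: each (finite) edge set carries the discrete
topology, whose Borel σ-algebra is `⊤`; the path space gets the (subspace of the) product
σ-algebra. -/
instance : MeasurableSpace B.PathSpace :=
  MeasurableSpace.comap (fun p => p.1) (MeasurableSpace.pi (m := fun _ => (⊤ : MeasurableSpace _)))

/-- Finite paths with `k` edges, from level `0` to level `k`. -/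
def FinPath (k : ℕ) : Type :=
  {e : ∀ i : Fin k, B.E i // ∀ (i : ℕ) (h : i + 1 < k),
    B.rng i (e ⟨i, Nat.lt_of_succ_lt h⟩) = B.src (i + 1) (e ⟨i + 1, h⟩)}

/-- The range (end vertex) of a finite path with `k+1` edges: a vertex at level `k+1`. -/
def endVertex (k : ℕ) (p : B.FinPath (k + 1)) : B.V (k + 1) :=
  B.rng k (p.1 ⟨k, Nat.lt_succ_self k⟩)

/-- The restriction of an infinite path to its first `k` edges. -/
def restr (k : ℕ) (q : B.PathSpace) : B.FinPath k :=
  ⟨fun i => q.1 i, fun i _ => q.2 i⟩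

/-- The cylinder set of all infinite paths agreeing with `p` on the first `k` edges. -/
def cyl (k : ℕ) (p : B.PathSpace) : Set B.PathSpace :=
  {q | ∀ i, i < k → q.1 i = p.1 i}

/-- Invariance of a measure under the tail equivalence relation: two cylinder sets given by
finite paths with the same range have the same measure.  (Since the source maps are
surjective, every finite path is the restriction of an infinite path.) -/
def TailInvariant (μ : Measure B.PathSpace) : Prop :=
  ∀ (k : ℕ) (p q : B.PathSpace), B.rng k (p.1 k) = B.rng k (q.1 k) →
    μ (B.cyl (k + 1) p) = μ (B.cyl (k + 1) q)

end BratteliDiagram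

/-! Tail invariance forces all cylinders over finite paths ending at the same vertex `v` to have
the same measure; these cylinders are disjoint and there are `|E_v| ≥ c e^{αk}` of them, so each
has measure at most `c⁻¹ e^{-αk}`. Hence `μ(Y_k) ≤ (C/c) e^{(β-α)k}`, which is summable since
`β < α`, and the Borel–Cantelli lemma gives `μ(limsup Y_k) = 0`. -/

open Set

section FiberMeasure

variable {α β : Type*} [MeasurableSpace α] {μ : Measure α} {f : α → β}

lemma measure_preimage_le_natCard_mul (T : Set β) [Finite T] {ε : ℝ≥0∞}
    (h : ∀ b ∈ T, μ (f ⁻¹' {b}) ≤ ε) : μ (f ⁻¹' T) ≤ Nat.card T * ε := by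
  have := Fintype.ofFinite T
  rw [← biUnion_preimage_singleton]
  calc μ (⋃ b ∈ T, f ⁻¹' {b}) ≤ ∑' b : T, μ (f ⁻¹' {(b : β)}) :=
        measure_biUnion_le μ T.to_countable _
    _ ≤ ∑ _ : T, ε := by
        rw [tsum_fintype]
        exact Finset.sum_le_sum fun b _ => h b.1 b.2
    _ = Nat.card T * ε := by
        rw [Finset.sum_const, Finset.card_univ, Nat.card_eq_fintype_card, nsmul_eq_mul]

lemma measure_preimage_eq_natCard_mul (hf : ∀ b, MeasurableSet (f ⁻¹' {b})) (T : Set β)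
    [Finite T] {m : ℝ≥0∞} (h : ∀ b ∈ T, μ (f ⁻¹' {b}) = m) : μ (f ⁻¹' T) = Nat.card T * m := by
  have := Fintype.ofFinite T
  rw [← tsum_measure_preimage_singleton T.to_countable fun b _ => hf b, tsum_fintype,
    Finset.sum_congr rfl fun b _ => h b.1 b.2, Finset.sum_const, Finset.card_univ,
    Nat.card_eq_fintype_card, nsmul_eq_mul]

end FiberMeasure

lemma measure_iInter_iUnion_eq_zero_of_le_ofReal {α : Type*} [MeasurableSpace α]
    {μ : Measure α} {s : ℕ → Set α} {g : ℕ → ℝ} (hs : ∀ k, μ (s k) ≤ ENNReal.ofReal (g k))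
    (hg : Summable g) : μ (⋂ n, ⋃ k, ⋃ (_ : n ≤ k), s k) = 0 := by
  have h := measure_limsup_atTop_eq_zero
    (ne_top_of_le_ne_top hg.tsum_ofReal_ne_top (ENNReal.tsum_le_tsum hs))
  rwa [Filter.limsup_eq_iInf_iSup_of_nat] at h

namespace BratteliDiagram

variable (B : BratteliDiagram)

instance (k : ℕ) : Finite (B.FinPath k) := by
  unfold FinPath
  infer_instance

instance (k : ℕ) : Nonempty (B.E k) :=
  ⟨(B.src_surj k (Classical.arbitrary _)).choose⟩

noncomputable def nextEdge (n : ℕ) (e : B.E n) : B.E (n + 1) :=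
  (B.src_surj (n + 1) (B.rng n e)).choose

lemma src_nextEdge (n : ℕ) (e : B.E n) : B.src (n + 1) (B.nextEdge n e) = B.rng n e :=
  (B.src_surj (n + 1) (B.rng n e)).choose_spec

noncomputable def extendFun (k : ℕ) (p : B.FinPath k) : ∀ n, B.E n
  | 0 => if h : 0 < k then p.1 ⟨0, h⟩ else Classical.arbitrary _
  | n + 1 => if h : n + 1 < k then p.1 ⟨n + 1, h⟩ else B.nextEdge n (extendFun k p n)

lemma extendFun_of_lt (k : ℕ) (p : B.FinPath k) (n : ℕ) (h : n < k) :
    B.extendFun k p n = p.1 ⟨n, h⟩ := by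
  cases n <;> simp [extendFun, h]

lemma rng_extendFun (k : ℕ) (p : B.FinPath k) (n : ℕ) :
    B.rng n (B.extendFun k p n) = B.src (n + 1) (B.extendFun k p (n + 1)) := by
  by_cases h : n + 1 < k
  · rw [B.extendFun_of_lt k p n (Nat.lt_of_succ_lt h), B.extendFun_of_lt k p (n + 1) h]
    exact p.2 n h
  · rw [show B.extendFun k p (n + 1) = B.nextEdge n (B.extendFun k p n) by simp [extendFun, h],
      B.src_nextEdge]

noncomputable def extend (k : ℕ) (p : B.FinPath k) : B.PathSpace :=
  ⟨B.extendFun k p, B.rng_extendFun k p⟩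

lemma restr_extend (k : ℕ) (p : B.FinPath k) : B.restr k (B.extend k p) = p :=
  Subtype.ext <| funext fun i => B.extendFun_of_lt k p i i.2

lemma rng_extend_eq_endVertex (k : ℕ) (p : B.FinPath (k + 1)) :
    B.rng k ((B.extend (k + 1) p).1 k) = B.endVertex k p :=
  congrArg (B.rng k) (B.extendFun_of_lt _ p k k.lt_succ_self)

lemma restr_preimage_singleton_restr (k : ℕ) (q : B.PathSpace) :
    B.restr k ⁻¹' {B.restr k q} = B.cyl k q := by
  ext q'
  change B.restr k q' = B.restr k q ↔ ∀ i, i < k → q'.1 i = q.1 i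
  exact ⟨fun h i hi => congrFun (congrArg Subtype.val h) ⟨i, hi⟩,
    fun h => Subtype.ext <| funext fun i => h i i.2⟩

lemma measurableSet_edge_eq (n : ℕ) (e : B.E n) :
    MeasurableSet {q : B.PathSpace | q.1 n = e} := by
  let : ∀ k, MeasurableSpace (B.E k) := fun _ => ⊤
  exact ⟨{f | f n = e}, measurable_pi_apply n (MeasurableSpace.measurableSet_top (s := {e})), rfl⟩

lemma measurableSet_restr_preimage_singleton (k : ℕ) (p : B.FinPath k) :
    MeasurableSet (B.restr k ⁻¹' {p}) := by
  have h : B.restr k ⁻¹' {p} = ⋂ i : Fin k, {q : B.PathSpace | q.1 i = p.1 i} := by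
    ext q
    simp only [mem_iInter, mem_ofPred_eq]
    change B.restr k q = p ↔ _
    exact ⟨fun h i => h ▸ rfl, fun h => Subtype.ext (funext h)⟩
  rw [h]
  exact .iInter fun i => B.measurableSet_edge_eq i (p.1 i)

variable {B}

lemma TailInvariant.measure_restr_preimage_singleton_eq {μ : Measure B.PathSpace}
    (hμ : B.TailInvariant μ) (k : ℕ) {p p' : B.FinPath (k + 1)}
    (h : B.endVertex k p = B.endVertex k p') :
    μ (B.restr (k + 1) ⁻¹' {p}) = μ (B.restr (k + 1) ⁻¹' {p'}) := by
  rw [← B.restr_extend _ p, ← B.restr_extend _ p', restr_preimage_singleton_restr,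
    restr_preimage_singleton_restr]
  apply hμ
  rw [rng_extend_eq_endVertex, rng_extend_eq_endVertex, h]

lemma TailInvariant.natCard_mul_measure_le {μ : Measure B.PathSpace} (hμ : B.TailInvariant μ)
    (k : ℕ) (p : B.FinPath (k + 1)) :
    (Nat.card {p' : B.FinPath (k + 1) // B.endVertex k p' = B.endVertex k p} : ℝ≥0∞) *
      μ (B.restr (k + 1) ⁻¹' {p}) ≤ μ univ := by
  calc _ = μ (B.restr (k + 1) ⁻¹' {p' | B.endVertex k p' = B.endVertex k p}) :=
        (measure_preimage_eq_natCard_mul (B.measurableSet_restr_preimage_singleton _) _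
          fun p' hp' => hμ.measure_restr_preimage_singleton_eq k hp').symm
    _ ≤ μ univ := measure_mono (subset_univ _)

end BratteliDiagram

theorem stmt8_general (B : BratteliDiagram) (μ : Measure B.PathSpace) [IsProbabilityMeasure μ]
    (hμ : B.TailInvariant μ)
    (D : ∀ k : ℕ, Set (B.FinPath (k + 1)))
    (c C α β : ℝ) (hc : 0 < c) (hαβ : β < α)
    (hE : ∀ (k : ℕ) (v : B.V (k + 1)),
      c * Real.exp (α * (k + 1)) ≤
        (Nat.card {p : B.FinPath (k + 1) // B.endVertex k p = v} : ℝ))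
    (hD : ∀ k : ℕ, (Nat.card (D k) : ℝ) ≤ C * Real.exp (β * (k + 1))) :
    μ (⋂ n, ⋃ k, ⋃ (_ : n ≤ k), {q : B.PathSpace | B.restr (k + 1) q ∈ D k}) = 0 := by
  set N : ℕ → ℝ := fun k => c * Real.exp (α * (k + 1))
  have hN : ∀ k, 0 < N k := fun k => by positivity
  have hcyl : ∀ k (p : B.FinPath (k + 1)),
      μ (B.restr (k + 1) ⁻¹' {p}) ≤ (ENNReal.ofReal (N k))⁻¹ := fun k p => by
    rw [ENNReal.le_inv_iff_mul_le, mul_comm, ← measure_univ (μ := μ)]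
    refine le_trans ?_ (hμ.natCard_mul_measure_le k p)
    gcongr
    exact ENNReal.ofReal_le_of_le_toReal (by simpa using hE k (B.endVertex k p))
  have hY : ∀ k, μ (B.restr (k + 1) ⁻¹' D k) ≤ ENNReal.ofReal (Nat.card (D k) / N k) := by
    intro k
    rw [ENNReal.ofReal_div_of_pos (hN k), ENNReal.ofReal_natCast, div_eq_mul_inv]
    exact measure_preimage_le_natCard_mul (D k) fun p _ => hcyl k p
  have hsum : Summable fun k => Nat.card (D k) / N k := by
    refine ((Real.summable_exp_nat_mul_iff.mpr (sub_neg.mpr hαβ)).mul_left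
      (C / c * Real.exp (β - α))).of_nonneg_of_le (fun k => by positivity) fun k => ?_
    calc Nat.card (D k) / N k ≤ C * Real.exp (β * (k + 1)) / N k :=
          div_le_div_of_nonneg_right (hD k) (hN k).le
      _ = C / c * Real.exp (β - α) * Real.exp (k * (β - α)) := by
          rw [mul_div_mul_comm, ← Real.exp_sub, mul_assoc, ← Real.exp_add]
          ring_nf
  exact measure_iInter_iUnion_eq_zero_of_le_ofReal hY hsum

/-- **Borel–Cantelli estimate for Bratteli diagrams.** If `μ` is a tail-invariant Borel
probability measure on the path space, `D k` is a set of finite paths from level `0` to level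
`k+1` with `Y k` the union of the corresponding cylinder sets, and there are constants
`c, C > 0` and `α > β ≥ 0` such that every vertex `v` at level `k+1` has at least
`c·e^{α(k+1)}` incoming finite paths from level `0`, while `|D k| ≤ C·e^{β(k+1)}`, then
`μ(limsup Y k) = 0`. -/
theorem stmt8 (B : BratteliDiagram) (μ : Measure B.PathSpace) [IsProbabilityMeasure μ]
    (hμ : B.TailInvariant μ)
    (D : ∀ k : ℕ, Set (B.FinPath (k + 1)))
    (c C α β : ℝ) (hc : 0 < c) (hC : 0 < C) (hβ : 0 ≤ β) (hαβ : β < α)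
    (hE : ∀ (k : ℕ) (v : B.V (k + 1)),
      c * Real.exp (α * (k + 1)) ≤
        (Nat.card {p : B.FinPath (k + 1) // B.endVertex k p = v} : ℝ))
    (hD : ∀ k : ℕ, (Nat.card (D k) : ℝ) ≤ C * Real.exp (β * (k + 1))) :
    μ (⋂ n, ⋃ k, ⋃ (_ : n ≤ k), {q : B.PathSpace | B.restr (k + 1) q ∈ D k}) = 0 :=
  stmt8_general B μ hμ D c C α β hc hαβ hE hD
end
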